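/- For every n ∈ ℕ, there exists a conflict-free subset of T_n of cardinality 2^n + n·2^{n−1} (for n ≥ 1; of cardinality 1 for n = 0). In particular, the set of all ternary strings of length n containing at most one digit equal to 2 is conflict-free and has exactly 2^n + n·2^{n−1} elements when n ≥ 1. -/

import Mathlib

/-- Two ternary strings of length `n` conflict if they are distinct, have a common
position where both equal `2`, and at every position where they differ one of them
is `0` and the other is `2`. -/
def Conflict {n : ℕ} (x y : Fin n → Fin 3) : Prop :=
  x ≠ y ∧ (∃ i, x i = 2 ∧ y i = 2) ∧
    ∀ j, x j ≠ y j → (x j = 0 ∧ y j = 2) ∨ (x j = 2 ∧ y j = 0)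

/-- A set of ternary strings is conflict-free if no two of its elements conflict. -/
def ConflictFree {n : ℕ} (S : Set (Fin n → Fin 3)) : Prop :=
  ∀ x ∈ S, ∀ y ∈ S, ¬ Conflict x y

lemma memTwo (v : Fin 3) : v ∈ ({0, 1} : Finset (Fin 3)) ↔ v ≠ 2 := by fin_cases v <;> decide

/-- The set of ternary strings of length `n` containing at most one digit equal to `2`
is conflict-free and has exactly `2 ^ n + n * 2 ^ (n - 1)` elements (which is `1` for
`n = 0`).  In particular `T_n` has a conflict-free subset of this cardinality. -/
theorem conflictFree_atMostOneTwo (n : ℕ) :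
    ConflictFree {x : Fin n → Fin 3 | {i | x i = 2}.Subsingleton} ∧
    ({x : Fin n → Fin 3 | {i | x i = 2}.Subsingleton}).ncard =
      2 ^ n + n * 2 ^ (n - 1) := by
  classical
  constructor
  · rintro x hx y hy ⟨hne, ⟨i, hxi, hyi⟩, hall⟩
    obtain ⟨j, hj⟩ := Function.ne_iff.mp hne
    rcases hall j hj with ⟨h0, h2⟩ | ⟨h2, h0⟩
    · have hij : i = j := hy hyi h2
      subst hij
      rw [hxi] at h0; exact absurd h0 (by decide)
    · have hij : i = j := hx hxi h2
      subst hij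
      rw [hyi] at h0; exact absurd h0 (by decide)
  · have hset : {x : Fin n → Fin 3 | {i | x i = 2}.Subsingleton} =
        ↑(Finset.univ.filter fun x : Fin n → Fin 3 =>
            (Finset.univ.filter fun i => x i = 2).card ≤ 1) := by
      ext x
      constructor
      · intro h
        rw [Finset.mem_coe, Finset.mem_filter]
        refine ⟨Finset.mem_univ x, Finset.card_le_one.mpr ?_⟩
        intro a ha b hb
        exact h (Finset.mem_filter.mp ha).2 (Finset.mem_filter.mp hb).2
      · intro h a ha b hb
        rw [Finset.mem_coe, Finset.mem_filter] at h
        exact Finset.card_le_one.mp h.2 a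
          (Finset.mem_filter.mpr ⟨Finset.mem_univ a, ha⟩) b
          (Finset.mem_filter.mpr ⟨Finset.mem_univ b, hb⟩)
    rw [hset, Set.ncard_coe_finset]
    have hsplit : (Finset.univ.filter fun x : Fin n → Fin 3 =>
        (Finset.univ.filter fun i => x i = 2).card ≤ 1) =
        (Finset.univ.filter fun x : Fin n → Fin 3 =>
          (Finset.univ.filter fun i => x i = 2).card = 0) ∪
        (Finset.univ.filter fun x : Fin n → Fin 3 =>
          (Finset.univ.filter fun i => x i = 2).card = 1) := by
      rw [← Finset.filter_or]
      apply Finset.filter_congr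
      intro x _
      omega
    have hdisj : Disjoint
        (Finset.univ.filter fun x : Fin n → Fin 3 =>
          (Finset.univ.filter fun i => x i = 2).card = 0)
        (Finset.univ.filter fun x : Fin n → Fin 3 =>
          (Finset.univ.filter fun i => x i = 2).card = 1) := by
      rw [Finset.disjoint_left]
      intro x hx hx'
      simp only [Finset.mem_filter] at hx hx'
      omega
    rw [hsplit, Finset.card_union_of_disjoint hdisj]
    have h0 : (Finset.univ.filter fun x : Fin n → Fin 3 =>
        (Finset.univ.filter fun i => x i = 2).card = 0) =
        Fintype.piFinset (fun _ : Fin n => ({0, 1} : Finset (Fin 3))) := by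
      ext x
      rw [Finset.mem_filter, Fintype.mem_piFinset]
      constructor
      · intro h i
        rw [memTwo]
        intro h2
        have hemp := Finset.card_eq_zero.mp h.2
        exact absurd (Finset.mem_filter.mpr ⟨Finset.mem_univ i, h2⟩)
          (by rw [hemp]; exact Finset.notMem_empty i)
      · intro h
        refine ⟨Finset.mem_univ x, Finset.card_eq_zero.mpr
          (Finset.eq_empty_iff_forall_notMem.mpr ?_)⟩
        intro i hi
        exact (memTwo _).mp (h i) (Finset.mem_filter.mp hi).2
    have h1 : (Finset.univ.filter fun x : Fin n → Fin 3 =>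
        (Finset.univ.filter fun i => x i = 2).card = 1) =
        Finset.univ.biUnion (fun i : Fin n =>
          Fintype.piFinset (fun j => if j = i then ({2} : Finset (Fin 3)) else {0, 1})) := by
      ext x
      rw [Finset.mem_filter, Finset.mem_biUnion]
      constructor
      · rintro ⟨-, h⟩
        obtain ⟨i, hi⟩ := Finset.card_eq_one.mp h
        refine ⟨i, Finset.mem_univ i, Fintype.mem_piFinset.mpr fun j => ?_⟩
        by_cases hji : j = i
        · subst hji
          have : j ∈ Finset.univ.filter fun i => x i = 2 := by
            rw [hi]; exact Finset.mem_singleton_self j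
          rw [if_pos rfl, Finset.mem_singleton]
          exact (Finset.mem_filter.mp this).2
        · rw [if_neg hji, memTwo]
          intro h2
          exact hji (Finset.mem_singleton.mp (hi ▸
            Finset.mem_filter.mpr ⟨Finset.mem_univ j, h2⟩))
      · rintro ⟨i, -, h⟩
        rw [Fintype.mem_piFinset] at h
        refine ⟨Finset.mem_univ x, Finset.card_eq_one.mpr ⟨i, ?_⟩⟩
        ext j
        rw [Finset.mem_filter, Finset.mem_singleton]
        constructor
        · rintro ⟨-, h2⟩
          by_contra hji
          have := h j
          rw [if_neg hji, memTwo] at this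
          exact this h2
        · intro hji
          subst hji
          have := h j
          rw [if_pos rfl, Finset.mem_singleton] at this
          exact ⟨Finset.mem_univ j, this⟩
    have hG : ∀ i : Fin n,
        (Fintype.piFinset (fun j => if j = i then ({2} : Finset (Fin 3)) else {0, 1})).card
        = 2 ^ (n - 1) := by
      intro i
      rw [Fintype.card_piFinset,
        ← Finset.mul_prod_erase Finset.univ _ (Finset.mem_univ i), if_pos rfl]
      have hc : ∀ j ∈ Finset.univ.erase i,
          (if j = i then ({2} : Finset (Fin 3)) else {0, 1}).card = 2 := by
        intro j hj
        rw [if_neg (Finset.ne_of_mem_erase hj)]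
        decide
      rw [Finset.prod_congr rfl hc, Finset.prod_const,
        Finset.card_erase_of_mem (Finset.mem_univ i)]
      simp [Finset.card_univ]
    rw [h0, h1, Fintype.card_piFinset, Finset.card_biUnion]
    · simp only [hG, Finset.sum_const, Finset.card_univ, Fintype.card_fin, smul_eq_mul]
      norm_num
    · intro i _ i' _ hii'
      rw [Function.onFun, Finset.disjoint_left]
      intro x hx hx'
      rw [Fintype.mem_piFinset] at hx hx'
      have h1 := hx i
      have h2 := hx' i
      rw [if_pos rfl, Finset.mem_singleton] at h1
      rw [if_neg hii', memTwo] at h2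
      exact h2 h1
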